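/- Consider the Bayesian joint model in which θ_0 ~ π, X | θ_0 ~ f_{θ_0}, conditionally on X the draws θ̂_1, …, θ̂_B are i.i.d. from the posterior π(· | X) (conditionally independent of θ_0 given X), and conditionally on (X, θ̂_1, …, θ̂_B) the copies X̃^{(1)}, …, X̃^{(M)} are i.i.d. draws from g_π(· | θ̂_{1:B}) (conditionally independent of θ_0 and X). Then the random vector (X, X̃^{(1)}, …, X̃^{(M)}) is exactly exchangeable: its joint law is invariant under every permutation of the M+1 coordinates. -/

import Mathlib

open MeasureTheory ProbabilityTheory ENNReal

open scoped Classical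

noncomputable section

/-- The total variation distance `d_TV(P, Q) = sup_A |P(A) - Q(A)|` between two measures. -/
def tvDist {Ω : Type*} [MeasurableSpace Ω] (P Q : Measure Ω) : ℝ≥0∞ :=
  ⨆ (s : Set Ω) (_ : MeasurableSet s), (P s - Q s) ⊔ (Q s - P s)

/-- The chi-squared divergence `χ²(Q ‖ P) = ∫ (dQ/dP - 1)² dP` if `Q ≪ P`, and `∞` otherwise. -/
def chiSq {Ω : Type*} [MeasurableSpace Ω] (Q P : Measure Ω) : ℝ≥0∞ :=
  if Q ≪ P then ∫⁻ ω, ((Q.rnDeriv P ω - 1) ⊔ (1 - Q.rnDeriv P ω)) ^ 2 ∂P else ⊤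

/-- A measure on `Fin n → 𝒳` is exchangeable if it is invariant under every permutation of the
coordinates. -/
def Exchangeable {𝒳 : Type*} [MeasurableSpace 𝒳] {n : ℕ} (Q : Measure (Fin n → 𝒳)) : Prop :=
  ∀ σ : Equiv.Perm (Fin n), Measure.map (fun v => v ∘ σ) Q = Q

/-- The distance to exchangeability: the infimum, over exchangeable probability measures `Q`,
of the total variation distance to `Q`. -/
def dExch {𝒳 : Type*} [MeasurableSpace 𝒳] {n : ℕ} (P : Measure (Fin n → 𝒳)) : ℝ≥0∞ :=
  ⨅ (Q : Measure (Fin n → 𝒳)) (_ : IsProbabilityMeasure Q) (_ : Exchangeable Q), tvDist P Q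

/-- The p-value `(1 + #{m : T(v (m+1)) ≥ T(v 0)}) / (M + 1)`, where `v 0` is the data and
`v 1, …, v M` are the copies. -/
def pval {𝒳 : Type*} {M : ℕ} (T : 𝒳 → ℝ) (v : Fin (M + 1) → 𝒳) : ℝ :=
  (1 + ((Finset.univ.filter fun m : Fin M => T (v 0) ≤ T (v m.succ)).card : ℝ)) / (M + 1)

variable {Θ 𝒳 : Type*} [MeasurableSpace Θ] [MeasurableSpace 𝒳]

/-- The marginal likelihood `f̄_π(x) = ∫ π(θ) f_θ(x) dν_Θ(θ)`. -/
def marg (νΘ : Measure Θ) (π : Θ → ℝ≥0∞) (f : Θ → 𝒳 → ℝ≥0∞) (x : 𝒳) : ℝ≥0∞ :=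
  ∫⁻ θ, π θ * f θ x ∂νΘ

/-- The posterior density `π(θ | x) = π(θ) f_θ(x) / f̄_π(x)`. -/
def postDens (νΘ : Measure Θ) (π : Θ → ℝ≥0∞) (f : Θ → 𝒳 → ℝ≥0∞) (x : 𝒳) (θ : Θ) : ℝ≥0∞ :=
  π θ * f θ x / marg νΘ π f x

/-- The posterior distribution of `θ` given `x`. -/
def postMeas (νΘ : Measure Θ) (π : Θ → ℝ≥0∞) (f : Θ → 𝒳 → ℝ≥0∞) (x : 𝒳) : Measure Θ :=
  νΘ.withDensity (postDens νΘ π f x)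

/-- The unnormalized density of the copies: `(∏_b f_{θ_b}(x)) / f̄_π(x)^{B-1}`. -/
def gDensU (νΘ : Measure Θ) (π : Θ → ℝ≥0∞) (f : Θ → 𝒳 → ℝ≥0∞) {B : ℕ}
    (θs : Fin B → Θ) (x : 𝒳) : ℝ≥0∞ :=
  (∏ b, f (θs b) x) / (marg νΘ π f x) ^ (B - 1)

/-- The normalizing constant of `gDensU`. -/
def gNorm (νΘ : Measure Θ) (ν𝒳 : Measure 𝒳) (π : Θ → ℝ≥0∞) (f : Θ → 𝒳 → ℝ≥0∞) {B : ℕ}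
    (θs : Fin B → Θ) : ℝ≥0∞ :=
  ∫⁻ x, gDensU νΘ π f θs x ∂ν𝒳

/-- The probability distribution `g_π(· | θ_{1:B})` on `𝒳`. -/
def gMeas (νΘ : Measure Θ) (ν𝒳 : Measure 𝒳) (π : Θ → ℝ≥0∞) (f : Θ → 𝒳 → ℝ≥0∞) {B : ℕ}
    (θs : Fin B → Θ) : Measure 𝒳 :=
  ν𝒳.withDensity fun x => gDensU νΘ π f θs x / gNorm νΘ ν𝒳 π f θs

/-- The prior concentration `ε(π₀) = d_TV(f_{θ₀}, f̄_{π₀})`. -/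
def priorEps (νΘ : Measure Θ) (ν𝒳 : Measure 𝒳) (f : Θ → 𝒳 → ℝ≥0∞) (θ0 : Θ)
    (π0 : Θ → ℝ≥0∞) : ℝ≥0∞ :=
  tvDist (ν𝒳.withDensity (f θ0)) (ν𝒳.withDensity (marg νΘ π0 f))

/-- The posterior sensitivity `Δ(π₀) = E_{X ~ f_{θ₀}}[χ²(π₀(·|X) ‖ π(·|X))^{1/2}]`. -/
def priorDelta (νΘ : Measure Θ) (ν𝒳 : Measure 𝒳) (π : Θ → ℝ≥0∞) (f : Θ → 𝒳 → ℝ≥0∞)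
    (θ0 : Θ) (π0 : Θ → ℝ≥0∞) : ℝ≥0∞ :=
  ∫⁻ x, (chiSq (postMeas νΘ π0 f x) (postMeas νΘ π f x)) ^ (1 / 2 : ℝ)
    ∂(ν𝒳.withDensity (f θ0))

/-- The bound `inf_{π₀} { ε(π₀) + Δ(π₀) / (2√B) }`, the infimum over all prior densities `π₀`
on `Θ` whose marginal `f̄_{π₀}` is positive wherever some `f_θ` is positive. -/
def acssBound (νΘ : Measure Θ) (ν𝒳 : Measure 𝒳) (π : Θ → ℝ≥0∞) (f : Θ → 𝒳 → ℝ≥0∞)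
    (θ0 : Θ) (B : ℕ) : ℝ≥0∞ :=
  sInf { r : ℝ≥0∞ | ∃ π0 : Θ → ℝ≥0∞, Measurable π0 ∧
    IsProbabilityMeasure (νΘ.withDensity π0) ∧
    (∀ θ x, f θ x ≠ 0 → marg νΘ π0 f x ≠ 0) ∧
    r = priorEps νΘ ν𝒳 f θ0 π0
        + priorDelta νΘ ν𝒳 π f θ0 π0 / (2 * (B : ℝ≥0∞) ^ (1 / 2 : ℝ)) }

/-! Integrating out `θ₀` leaves the density `f̄_π(x) ∏_b π(θ̂_b | x) ∏_m g_π(x̃_m | θ̂)` of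
`(X, θ̂_{1:B}, X̃^{(1:M)})`. Wherever `f̄_π(x) < ∞` (almost everywhere, `f̄_π` being a probability
density), `f̄_π(x) ∏_b π(θ̂_b | x) = (∏_b π(θ̂_b)) ∏_b f_{θ̂_b}(x) / f̄_π(x)^{B-1}`, which is
`∏_b π(θ̂_b)` times the unnormalised density `g̃(x | θ̂)` of `g_π(· | θ̂)`. So the data point enters
exactly like each copy: with `Z(θ̂)` the normaliser of `g̃`, the density is
`(∏_b π(θ̂_b)) Z(θ̂)^{-M} ∏_{i=0}^M g̃(v_i | θ̂)` in `v = (X, X̃)`, a mixture of i.i.d. laws, and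
stays symmetric in `v` after integrating out `θ̂`. -/

namespace MeasureTheory.Measure

variable {α β : Type*} [MeasurableSpace α] [MeasurableSpace β]

theorem map_withDensity_comp {T : α → β} (hT : Measurable T) (μ : Measure α) {D : β → ℝ≥0∞}
    (hD : Measurable D) : (μ.withDensity (D ∘ T)).map T = (μ.map T).withDensity D := by
  ext s hs
  rw [map_apply hT hs, withDensity_apply _ (hT hs), withDensity_apply _ hs,
    setLIntegral_map hs hD hT, Function.comp_def]

theorem map_snd_withDensity_prod (μ : Measure α) (ν : Measure β) [SFinite μ] [SFinite ν]
    {D : α × β → ℝ≥0∞} (hD : Measurable D) :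
    ((μ.prod ν).withDensity D).map Prod.snd = ν.withDensity fun b => ∫⁻ a, D (a, b) ∂μ := by
  ext s hs
  rw [map_apply measurable_snd hs, withDensity_apply _ (measurable_snd hs),
    withDensity_apply _ hs, ← Set.univ_prod, setLIntegral_prod_symm _ hD.aemeasurable]
  simp only [restrict_univ]

theorem measurePreserving_comp_perm {ι : Type*} [Fintype ι] (ν : Measure α) [SigmaFinite ν]
    (σ : Equiv.Perm ι) :
    MeasurePreserving (fun v : ι → α => v ∘ σ) (Measure.pi fun _ => ν) (Measure.pi fun _ => ν) := by
  convert measurePreserving_piCongrLeft (fun _ : ι => ν) σ.symm using 1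
  ext v i
  simpa using (MeasurableEquiv.piCongrLeft_apply_apply (β := fun _ => α) σ.symm v (σ i)).symm

end MeasureTheory.Measure

theorem exchangeable_pi_withDensity {α : Type*} [MeasurableSpace α] {n : ℕ} (ν : Measure α)
    [SigmaFinite ν] {ρ : (Fin n → α) → ℝ≥0∞} (hρ : Measurable ρ)
    (hsymm : ∀ (σ : Equiv.Perm (Fin n)) v, ρ (v ∘ σ) = ρ v) :
    Exchangeable ((Measure.pi fun _ => ν).withDensity ρ) := by
  intro σ
  have hperm := Measure.measurePreserving_comp_perm ν σ
  have hρσ : ρ ∘ (fun v => v ∘ σ) = ρ := funext (hsymm σ)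
  rw [← hρσ, Measure.map_withDensity_comp hperm.measurable _ hρ, hperm.map_eq, hρσ]

theorem measurePreserving_swap_cons {α β : Type*} [MeasurableSpace α] [MeasurableSpace β]
    {n : ℕ} (ν : Measure α) (τ : Measure β) [SigmaFinite ν] [SigmaFinite τ] :
    MeasurePreserving
      (fun p : α × β × (Fin n → α) => (p.2.1, (Fin.cons p.1 p.2.2 : Fin (n + 1) → α)))
      (ν.prod (τ.prod (Measure.pi fun _ => ν))) (τ.prod (Measure.pi fun _ => ν)) := by
  have hcons : MeasurePreserving (fun q : α × (Fin n → α) => (Fin.cons q.1 q.2 : Fin (n + 1) → α))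
      (ν.prod (Measure.pi fun _ => ν)) (Measure.pi fun _ => ν) := by
    convert (measurePreserving_piFinSuccAbove (fun _ : Fin (n + 1) => ν) 0).symm using 1
    ext q : 1
    simp only [MeasurableEquiv.piFinSuccAbove_symm_apply, Fin.insertNthEquiv_zero]
    rfl
  exact ((MeasurePreserving.id τ).prod hcons).comp
    ((measurePreserving_prodAssoc τ ν _).comp
      (((Measure.measurePreserving_swap (μ := ν) (ν := τ)).prod (MeasurePreserving.id _)).comp
        (measurePreserving_prodAssoc ν τ _).symm))

theorem ENNReal.mul_prod_mul_div {n : ℕ} {m : ℝ≥0∞} (hm : m ≠ ⊤) (a g : Fin (n + 1) → ℝ≥0∞)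
    (hg : m = 0 → ∏ b, g b = 0) :
    m * ∏ b, a b * g b / m = (∏ b, a b) * ((∏ b, g b) / m ^ n) := by
  rcases eq_or_ne m 0 with h0 | h0
  · simp [h0, hg h0]
  · simp_rw [div_eq_mul_inv, Finset.prod_mul_distrib, Finset.prod_const, Finset.card_univ,
      Fintype.card_fin, ENNReal.inv_pow, pow_succ]
    calc _ = (∏ b, a b) * ((∏ b, g b) * m⁻¹ ^ n) * (m * m⁻¹) := by ring
      _ = _ := by rw [ENNReal.mul_inv_cancel h0 hm, mul_one]

section BayesModel

variable {νΘ : Measure Θ} {ν𝒳 : Measure 𝒳} {π : Θ → ℝ≥0∞} {f : Θ → 𝒳 → ℝ≥0∞}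

theorem measurable_marg [SFinite νΘ] (hπ : Measurable π) (hf : Measurable (Function.uncurry f)) :
    Measurable (marg νΘ π f) :=
  ((hπ.comp measurable_fst).mul hf).lintegral_prod_left

theorem measurable_postDens [SFinite νΘ] (hπ : Measurable π)
    (hf : Measurable (Function.uncurry f)) :
    Measurable (Function.uncurry (postDens νΘ π f)) := by
  have := measurable_marg (νΘ := νΘ) hπ hf
  unfold postDens Function.uncurry
  fun_prop

theorem measurable_gDensU [SFinite νΘ] {B : ℕ} (hπ : Measurable π)
    (hf : Measurable (Function.uncurry f)) :
    Measurable (Function.uncurry (gDensU νΘ π f (B := B))) := by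
  have := measurable_marg (νΘ := νΘ) hπ hf
  unfold gDensU Function.uncurry
  fun_prop

theorem measurable_gNorm [SFinite νΘ] [SFinite ν𝒳] {B : ℕ} (hπ : Measurable π)
    (hf : Measurable (Function.uncurry f)) :
    Measurable (gNorm νΘ ν𝒳 π f (B := B)) :=
  (measurable_gDensU hπ hf).lintegral_prod_right'

theorem lintegral_marg [SFinite νΘ] [SFinite ν𝒳] (hπ : Measurable π)
    (hf : Measurable (Function.uncurry f))
    (hfprob : ∀ θ, IsProbabilityMeasure (ν𝒳.withDensity (f θ)))
    (hπprob : IsProbabilityMeasure (νΘ.withDensity π)) :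
    ∫⁻ x, marg νΘ π f x ∂ν𝒳 = 1 := by
  have hf_one (θ : Θ) : ∫⁻ x, f θ x ∂ν𝒳 = 1 := by
    rw [← setLIntegral_univ, ← withDensity_apply _ .univ, measure_univ]
  have hπ_one : ∫⁻ θ, π θ ∂νΘ = 1 := by
    rw [← setLIntegral_univ, ← withDensity_apply _ .univ, measure_univ]
  unfold marg
  rw [lintegral_lintegral_swap
    ((hπ.comp measurable_snd).mul (hf.comp measurable_swap)).aemeasurable]
  calc ∫⁻ θ, ∫⁻ x, π θ * f θ x ∂ν𝒳 ∂νΘ = ∫⁻ θ, π θ ∂νΘ := lintegral_congr fun θ => by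
        rw [lintegral_const_mul _ hf.of_uncurry_left, hf_one, mul_one]
    _ = 1 := hπ_one

theorem ae_marg_ne_top [SFinite νΘ] [SFinite ν𝒳] (hπ : Measurable π)
    (hf : Measurable (Function.uncurry f))
    (hfprob : ∀ θ, IsProbabilityMeasure (ν𝒳.withDensity (f θ)))
    (hπprob : IsProbabilityMeasure (νΘ.withDensity π)) :
    ∀ᵐ x ∂ν𝒳, marg νΘ π f x ≠ ⊤ :=
  ae_lt_top (measurable_marg hπ hf) (by simp [lintegral_marg hπ hf hfprob hπprob]) |>.mono
    fun _ hx => hx.ne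

variable (νΘ ν𝒳 π f) in
def bayesJointDens {B M : ℕ} (p : Θ × 𝒳 × (Fin B → Θ) × (Fin M → 𝒳)) : ℝ≥0∞ :=
  π p.1 * f p.1 p.2.1 * (∏ b, postDens νΘ π f p.2.1 (p.2.2.1 b))
    * ∏ m, gDensU νΘ π f p.2.2.1 (p.2.2.2 m) / gNorm νΘ ν𝒳 π f p.2.2.1

variable (νΘ ν𝒳 π f) in
def copiesJointDens {B M : ℕ} (q : (Fin B → Θ) × (Fin (M + 1) → 𝒳)) : ℝ≥0∞ :=
  (∏ b, π (q.1 b)) * (gNorm νΘ ν𝒳 π f q.1)⁻¹ ^ M * ∏ i, gDensU νΘ π f q.1 (q.2 i)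

theorem measurable_copiesJointDens [SFinite νΘ] [SFinite ν𝒳] {B M : ℕ}
    (hπ : Measurable π) (hf : Measurable (Function.uncurry f)) :
    Measurable (copiesJointDens νΘ ν𝒳 π f (B := B) (M := M)) := by
  have := measurable_gDensU (νΘ := νΘ) (B := B) hπ hf
  have := measurable_gNorm (νΘ := νΘ) (ν𝒳 := ν𝒳) (B := B) hπ hf
  unfold copiesJointDens
  fun_prop

theorem map_snd_bayesJoint [SigmaFinite νΘ] [SigmaFinite ν𝒳] {B M : ℕ}
    (hπ : Measurable π) (hf : Measurable (Function.uncurry f))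
    (hfprob : ∀ θ, IsProbabilityMeasure (ν𝒳.withDensity (f θ)))
    (hπprob : IsProbabilityMeasure (νΘ.withDensity π))
    (hsupp : ∀ θ x, f θ x ≠ 0 → marg νΘ π f x ≠ 0) (hB : 1 ≤ B) :
    ((νΘ.prod (ν𝒳.prod ((Measure.pi fun _ : Fin B => νΘ).prod
        (Measure.pi fun _ : Fin M => ν𝒳)))).withDensity (bayesJointDens νΘ ν𝒳 π f)).map Prod.snd
      = (ν𝒳.prod ((Measure.pi fun _ => νΘ).prod (Measure.pi fun _ => ν𝒳))).withDensity
          (copiesJointDens νΘ ν𝒳 π f ∘ fun y => (y.2.1, Fin.cons y.1 y.2.2)) := by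
  have := measurable_postDens (νΘ := νΘ) hπ hf
  have := measurable_gDensU (νΘ := νΘ) (B := B) hπ hf
  have := measurable_gNorm (νΘ := νΘ) (ν𝒳 := ν𝒳) (B := B) hπ hf
  rw [Measure.map_snd_withDensity_prod _ _ (by unfold bayesJointDens; fun_prop)]
  refine withDensity_congr_ae ?_
  obtain ⟨n, rfl⟩ := Nat.exists_eq_add_of_le' hB
  filter_upwards [Measure.quasiMeasurePreserving_fst.ae (ae_marg_ne_top hπ hf hfprob hπprob)]
    with ⟨x, θs, xs⟩ hx
  have hpost : marg νΘ π f x * ∏ b, postDens νΘ π f x (θs b)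
      = (∏ b, π (θs b)) * gDensU νΘ π f θs x :=
    ENNReal.mul_prod_mul_div hx _ _ fun h0 =>
      Finset.prod_eq_zero (Finset.mem_univ 0) (not_not.1 fun h => hsupp _ _ h h0)
  dsimp only [bayesJointDens, Function.comp]
  rw [lintegral_mul_const _ (by fun_prop), lintegral_mul_const _ (by fun_prop)]
  change marg νΘ π f x * _ * _ = _
  rw [hpost]
  simp only [copiesJointDens, Fin.prod_univ_succ, Fin.cons_zero, Fin.cons_succ, div_eq_mul_inv,
    Finset.prod_mul_distrib, Finset.prod_const, Finset.card_univ, Fintype.card_fin]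
  ring

variable (νΘ ν𝒳 π f) in
theorem map_cons_bayesJoint [SigmaFinite νΘ] [SigmaFinite ν𝒳] {B M : ℕ}
    (hπ : Measurable π) (hf : Measurable (Function.uncurry f))
    (hfprob : ∀ θ, IsProbabilityMeasure (ν𝒳.withDensity (f θ)))
    (hπprob : IsProbabilityMeasure (νΘ.withDensity π))
    (hsupp : ∀ θ x, f θ x ≠ 0 → marg νΘ π f x ≠ 0) (hB : 1 ≤ B) :
    ((νΘ.prod (ν𝒳.prod ((Measure.pi fun _ : Fin B => νΘ).prod
        (Measure.pi fun _ : Fin M => ν𝒳)))).withDensity (bayesJointDens νΘ ν𝒳 π f)).map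
          (fun p => (Fin.cons p.2.1 p.2.2.2 : Fin (M + 1) → 𝒳))
      = (Measure.pi fun _ => ν𝒳).withDensity fun v =>
          ∫⁻ θs, copiesJointDens νΘ ν𝒳 π f (θs, v) ∂(Measure.pi fun _ : Fin B => νΘ) := by
  have hdens := measurable_copiesJointDens (νΘ := νΘ) (ν𝒳 := ν𝒳) (B := B) (M := M) hπ hf
  have hreorder := measurePreserving_swap_cons ν𝒳 (Measure.pi fun _ : Fin B => νΘ) (n := M)
  have hcomp : (fun p : Θ × 𝒳 × (Fin B → Θ) × (Fin M → 𝒳) =>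
      (Fin.cons p.2.1 p.2.2.2 : Fin (M + 1) → 𝒳))
        = Prod.snd ∘ (fun y => (y.2.1, Fin.cons y.1 y.2.2)) ∘ Prod.snd := rfl
  rw [hcomp, ← Measure.map_map measurable_snd (hreorder.measurable.comp measurable_snd),
    ← Measure.map_map hreorder.measurable measurable_snd,
    map_snd_bayesJoint hπ hf hfprob hπprob hsupp hB,
    Measure.map_withDensity_comp hreorder.measurable _ hdens, hreorder.map_eq,
    Measure.map_snd_withDensity_prod _ _ hdens]

theorem copiesJointDens_comp_perm {B M : ℕ} (σ : Equiv.Perm (Fin (M + 1)))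
    (θs : Fin B → Θ) (v : Fin (M + 1) → 𝒳) :
    copiesJointDens νΘ ν𝒳 π f (θs, v ∘ σ) = copiesJointDens νΘ ν𝒳 π f (θs, v) := by
  unfold copiesJointDens
  congr 1
  exact Equiv.prod_comp σ fun i => gDensU νΘ π f θs (v i)

end BayesModel

theorem bayes_copies_exchangeable_general
    {Θ 𝒳 : Type*} [MeasurableSpace Θ] [MeasurableSpace 𝒳]
    (νΘ : Measure Θ) (ν𝒳 : Measure 𝒳) [SigmaFinite νΘ] [SigmaFinite ν𝒳]
    (f : Θ → 𝒳 → ℝ≥0∞) (hf : Measurable (Function.uncurry f))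
    (hfprob : ∀ θ, IsProbabilityMeasure (ν𝒳.withDensity (f θ)))
    (π : Θ → ℝ≥0∞) (hπ : Measurable π)
    (hπprob : IsProbabilityMeasure (νΘ.withDensity π))
    (hsupp : ∀ θ x, f θ x ≠ 0 → marg νΘ π f x ≠ 0)
    (B M : ℕ) (hB : 1 ≤ B) :
    Exchangeable (Measure.map
      (fun p : Θ × 𝒳 × (Fin B → Θ) × (Fin M → 𝒳) =>
        (Fin.cons p.2.1 p.2.2.2 : Fin (M + 1) → 𝒳))
      ((νΘ.prod (ν𝒳.prod ((Measure.pi fun _ : Fin B => νΘ).prod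
          (Measure.pi fun _ : Fin M => ν𝒳)))).withDensity
        fun p => π p.1 * f p.1 p.2.1
          * (∏ b, postDens νΘ π f p.2.1 (p.2.2.1 b))
          * ∏ m, gDensU νΘ π f p.2.2.1 (p.2.2.2 m) / gNorm νΘ ν𝒳 π f p.2.2.1)) := by
  have hmix : Measurable fun v => ∫⁻ θs, copiesJointDens νΘ ν𝒳 π f (θs, v)
      ∂(Measure.pi fun _ : Fin B => νΘ) :=
    (measurable_copiesJointDens (M := M) hπ hf).lintegral_prod_left'
  convert exchangeable_pi_withDensity ν𝒳 hmix
    fun σ v => lintegral_congr fun θs => copiesJointDens_comp_perm σ θs v using 1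
  exact map_cons_bayesJoint νΘ ν𝒳 π f hπ hf hfprob hπprob hsupp hB

/-- **Exact exchangeability in the Bayesian model.** In the Bayesian joint model `θ₀ ~ π`,
`X | θ₀ ~ f_{θ₀}`, `θ̂_1, …, θ̂_B | X` i.i.d. from the posterior `π(· | X)` (conditionally
independent of `θ₀` given `X`), and `X̃⁽¹⁾, …, X̃⁽ᴹ⁾ | (X, θ̂_{1:B})` i.i.d. from
`g_π(· | θ̂_{1:B})` (conditionally independent of `θ₀` and `X`), the random vector
`(X, X̃⁽¹⁾, …, X̃⁽ᴹ⁾)` is exactly exchangeable. -/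
theorem bayes_copies_exchangeable
    {Θ 𝒳 : Type*} [MeasurableSpace Θ] [MeasurableSpace 𝒳]
    (νΘ : Measure Θ) (ν𝒳 : Measure 𝒳) [SigmaFinite νΘ] [SigmaFinite ν𝒳]
    (f : Θ → 𝒳 → ℝ≥0∞) (hf : Measurable (Function.uncurry f))
    (hfprob : ∀ θ, IsProbabilityMeasure (ν𝒳.withDensity (f θ)))
    (π : Θ → ℝ≥0∞) (hπ : Measurable π) (hπpos : ∀ θ, 0 < π θ)
    (hπprob : IsProbabilityMeasure (νΘ.withDensity π))
    (hsupp : ∀ θ x, f θ x ≠ 0 → marg νΘ π f x ≠ 0)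
    (B M : ℕ) (hB : 1 ≤ B)
    (hnorm : ∀ θs : Fin B → Θ,
      0 < gNorm νΘ ν𝒳 π f θs ∧ gNorm νΘ ν𝒳 π f θs < ⊤) :
    Exchangeable (Measure.map
      (fun p : Θ × 𝒳 × (Fin B → Θ) × (Fin M → 𝒳) =>
        (Fin.cons p.2.1 p.2.2.2 : Fin (M + 1) → 𝒳))
      ((νΘ.prod (ν𝒳.prod ((Measure.pi fun _ : Fin B => νΘ).prod
          (Measure.pi fun _ : Fin M => ν𝒳)))).withDensity
        fun p => π p.1 * f p.1 p.2.1
          * (∏ b, postDens νΘ π f p.2.1 (p.2.2.1 b))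
          * ∏ m, gDensU νΘ π f p.2.2.1 (p.2.2.2 m) / gNorm νΘ ν𝒳 π f p.2.2.1)) :=
  bayes_copies_exchangeable_general νΘ ν𝒳 f hf hfprob π hπ hπprob hsupp B M hB
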